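/- arXiv:2001.08079 — 3 statements merged into one kernel-verified Lean document; each statement's English description precedes it below -/
import Mathlib

section
/- For any prime p ≡ 3 (mod 4), the sum over k from 0 to (p-1)/2 of ((1/2)_k)^3 / (k!)^3 is congruent to 0 modulo p^2, where the sum is interpreted as a rational number whose p-adic valuation is at least 2. -/
open Finset

/-- The rising factorial (Pochhammer symbol) `(a)_k = a(a+1)⋯(a+k-1)` for `a : ℚ`. -/
def risingFactorial (a : ℚ) (k : ℕ) : ℚ := ∏ i ∈ Finset.range k, (a + i)

/-!
With `m = (p - 1) / 2` one has `(1/2 + i)² - (i - m)(i + m + 1) = p² / 4`, so for `k ≤ m < p` the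
summand `(1/2)_k³ / k!³` is congruent modulo `p²`, among `p`-integral rationals, to
`(1/2)_k (-m)_k (m+1)_k / k!³`. These terms sum to the terminating series
`₃F₂(1/2, -m, m+1; 1, 1; 1) = S(m)`, which satisfies Zeilberger's recurrence
`(m+2)² S(m+2) = (m+1)² S(m)` and `S(1) = 0`, hence vanishes for odd `m`, i.e. for `p ≡ 3 (mod 4)`.
-/

lemma risingFactorial_succ (a : ℚ) (k : ℕ) :
    risingFactorial a (k + 1) = risingFactorial a k * (a + k) :=
  prod_range_succ _ _

lemma risingFactorial_mul_add_mul_add (a : ℚ) (k : ℕ) :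
    risingFactorial a k * ((a + k) * (a + k + 1)) = a * (a + 1) * risingFactorial (a + 2) k := by
  calc risingFactorial a k * ((a + k) * (a + k + 1)) = ∏ i ∈ range (k + 2), (a + i) := by
        rw [prod_range_succ, prod_range_succ, risingFactorial]; push_cast; ring
    _ = a * (a + 1) * risingFactorial (a + 2) k := by
        rw [prod_range_succ', prod_range_succ', risingFactorial, mul_assoc, mul_comm]
        push_cast
        simp only [add_assoc, one_add_one_eq_two, add_comm (2 : ℚ)]
        ring

lemma risingFactorial_neg_natCast_eq_zero {M k : ℕ} (h : M < k) :
    risingFactorial (-M) k = 0 :=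
  prod_eq_zero (mem_range.2 h) (neg_add_cancel _)

lemma risingFactorial_mem {R : Subring ℚ} {a : ℚ} (ha : a ∈ R) (k : ℕ) :
    risingFactorial a k ∈ R :=
  prod_mem fun i _ => add_mem ha (natCast_mem R i)

section Watson

variable (M : ℕ)

def watsonTerm (k : ℕ) : ℚ :=
  risingFactorial (1 / 2) k * risingFactorial (-M) k * risingFactorial (M + 1) k /
    (k.factorial : ℚ) ^ 3

def watsonSum : ℚ := ∑ k ∈ range (M + 1), watsonTerm M k

variable {M} in
lemma watsonTerm_eq_zero {k : ℕ} (h : M < k) : watsonTerm M k = 0 := by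
  simp [watsonTerm, risingFactorial_neg_natCast_eq_zero h]

lemma sum_range_watsonTerm {N : ℕ} (hN : M + 1 ≤ N) :
    ∑ k ∈ range N, watsonTerm M k = watsonSum M :=
  (sum_subset (range_subset_range.2 hN) fun _ _ hk =>
    watsonTerm_eq_zero (by simpa using hk)).symm

/-- The common factor of `watsonTerm M k` and `watsonTerm (M + 2) k`, through which the
Zeilberger certificate of the recurrence for `watsonSum` becomes polynomial. -/
def watsonCofactor (k : ℕ) : ℚ :=
  risingFactorial (1 / 2) k * risingFactorial (-M - 2) k * risingFactorial (M + 1) k /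
    (k.factorial : ℚ) ^ 3

lemma mul_watsonTerm_add_two (k : ℕ) :
    (M + 1) * (M + 2) * watsonTerm (M + 2) k =
      (M + k + 1) * (M + k + 2) * watsonCofactor M k := by
  have h := risingFactorial_mul_add_mul_add (M + 1) k
  simp only [watsonTerm, watsonCofactor]
  push_cast
  rw [show (-((M : ℚ) + 2)) = -M - 2 by ring, show (M : ℚ) + 2 + 1 = M + 1 + 2 by ring]
  linear_combination
    -(risingFactorial (1 / 2) k * risingFactorial (-M - 2) k / (k.factorial : ℚ) ^ 3) * h

lemma mul_watsonTerm (k : ℕ) :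
    (M + 1) * (M + 2) * watsonTerm M k = (k - M - 2) * (k - M - 1) * watsonCofactor M k := by
  have h := risingFactorial_mul_add_mul_add (-M - 2) k
  rw [show (-M - 2 : ℚ) + 2 = -M by ring] at h
  simp only [watsonTerm, watsonCofactor]
  linear_combination
    -(risingFactorial (1 / 2) k * risingFactorial (M + 1) k / (k.factorial : ℚ) ^ 3) * h

lemma watsonCofactor_succ (k : ℕ) :
    ((k : ℚ) + 1) ^ 3 * watsonCofactor M (k + 1) =
      (1 / 2 + k) * (k - M - 2) * (M + 1 + k) * watsonCofactor M k := by
  simp only [watsonCofactor, risingFactorial_succ, Nat.factorial_succ]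
  push_cast
  field_simp
  ring

lemma watsonCofactor_eq_zero {k : ℕ} (h : M + 2 < k) : watsonCofactor M k = 0 := by
  have h0 := risingFactorial_neg_natCast_eq_zero h
  rw [Nat.cast_add, Nat.cast_two, neg_add'] at h0
  simp [watsonCofactor, h0]

/-- Zeilberger's certificate `G k = -2 (2M+3) k³ watsonCofactor M k`. -/
lemma watsonTerm_telescope (k : ℕ) :
    (M + 1) * (M + 2) * ((M + 2) ^ 2 * watsonTerm (M + 2) k - (M + 1) ^ 2 * watsonTerm M k) =
      -2 * (2 * M + 3) * (((k : ℚ) + 1) ^ 3 * watsonCofactor M (k + 1) -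
        (k : ℚ) ^ 3 * watsonCofactor M k) := by
  linear_combination (M + 2) ^ 2 * mul_watsonTerm_add_two M k -
    (M + 1) ^ 2 * mul_watsonTerm M k + 2 * (2 * M + 3) * watsonCofactor_succ M k

lemma watsonSum_add_two : ((M : ℚ) + 2) ^ 2 * watsonSum (M + 2) = (M + 1) ^ 2 * watsonSum M := by
  have htel := sum_range_sub (fun k => (k : ℚ) ^ 3 * watsonCofactor M k) (M + 3)
  simp only [Nat.cast_add, Nat.cast_ofNat, Nat.cast_one, Nat.cast_zero] at htel
  rw [watsonCofactor_eq_zero M (by omega), mul_zero, zero_pow three_ne_zero, zero_mul,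
    sub_zero] at htel
  have h := sum_congr rfl fun k (_ : k ∈ range (M + 3)) => watsonTerm_telescope M k
  rw [← mul_sum, ← mul_sum, htel, mul_zero, sum_sub_distrib, ← mul_sum, ← mul_sum,
    sum_range_watsonTerm _ le_rfl, sum_range_watsonTerm _ (by omega)] at h
  have hM : ((M : ℚ) + 1) * (M + 2) ≠ 0 := by positivity
  exact sub_eq_zero.1 ((mul_eq_zero.1 h).resolve_left hM)

lemma watsonSum_odd (j : ℕ) : watsonSum (2 * j + 1) = 0 := by
  induction j with
  | zero => norm_num [watsonSum, watsonTerm, sum_range_succ, risingFactorial]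
  | succ j ih =>
    have h := watsonSum_add_two (2 * j + 1)
    rw [ih, mul_zero] at h
    exact (mul_eq_zero.1 h).resolve_left (by positivity)

end Watson

lemma prod_sub_prod_div_mem {K ι : Type*} [Field K] (R : Subring K) (c : K) (s : Finset ι)
    {x y : ι → K} (hx : ∀ i ∈ s, x i ∈ R) (hy : ∀ i ∈ s, y i ∈ R)
    (hxy : ∀ i ∈ s, (x i - y i) / c ∈ R) :
    ((∏ i ∈ s, x i) - ∏ i ∈ s, y i) / c ∈ R := by
  induction s using Finset.cons_induction with
  | empty => simp
  | cons a s ha ih =>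
    simp only [forall_mem_cons] at hx hy hxy
    have h : ((∏ i ∈ s.cons a ha, x i) - ∏ i ∈ s.cons a ha, y i) / c =
        x a * (((∏ i ∈ s, x i) - ∏ i ∈ s, y i) / c) + (x a - y a) / c * ∏ i ∈ s, y i := by
      rw [prod_cons, prod_cons]; ring
    rw [h]
    exact add_mem (mul_mem hx.1 (ih hx.2 hy.2 hxy.2)) (mul_mem hxy.1 (prod_mem hy.2))

/-- Factorwise, `(1/2 + i)² - (i - m)(i + m + 1) = (2m + 1)² / 4`. -/
lemma risingFactorial_half_sq_sub_div_mem {R : Subring ℚ} (h2 : (2 : ℚ)⁻¹ ∈ R) (m k : ℕ) :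
    (risingFactorial (1 / 2) k ^ 2 - risingFactorial (-m) k * risingFactorial (m + 1) k) /
      (2 * m + 1) ^ 2 ∈ R := by
  rw [risingFactorial, risingFactorial, risingFactorial, ← prod_pow, ← prod_mul_distrib]
  refine prod_sub_prod_div_mem R _ _ (fun i _ => pow_mem ?_ 2)
    (fun i _ => mul_mem (add_mem (neg_mem (natCast_mem R m)) (natCast_mem R i))
      (add_mem (add_mem (natCast_mem R m) (one_mem R)) (natCast_mem R i)))
    (fun i _ => ?_)
  · exact add_mem (by simpa using h2) (natCast_mem R i)
  · convert mul_mem h2 h2 using 1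
    field_simp
    ring

lemma cube_div_factorial_sub_watsonTerm_div_mem {R : Subring ℚ} (h2 : (2 : ℚ)⁻¹ ∈ R) {m k : ℕ}
    (hk : (k.factorial : ℚ)⁻¹ ∈ R) :
    (risingFactorial (1 / 2) k ^ 3 / (k.factorial : ℚ) ^ 3 - watsonTerm m k) / (2 * m + 1) ^ 2
      ∈ R := by
  have hhalf : risingFactorial (1 / 2) k ∈ R := risingFactorial_mem (by simpa using h2) k
  convert mul_mem (mul_mem (risingFactorial_half_sq_sub_div_mem h2 m k) hhalf) (pow_mem hk 3)
    using 1
  rw [watsonTerm]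
  ring

def pIntegral (p : ℕ) [Fact p.Prime] : Subring ℚ where
  carrier := {q | ¬ p ∣ q.den}
  mul_mem' {a b} ha hb h := Nat.Prime.not_dvd_mul Fact.out ha hb (h.trans (Rat.mul_den_dvd a b))
  one_mem' := by simpa using (Fact.out : p.Prime).ne_one
  add_mem' {a b} ha hb h := Nat.Prime.not_dvd_mul Fact.out ha hb (h.trans (Rat.add_den_dvd a b))
  zero_mem' := by simpa using (Fact.out : p.Prime).ne_one
  neg_mem' := by simp

lemma inv_natCast_mem_pIntegral {p n : ℕ} [Fact p.Prime] (h : ¬ p ∣ n) :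
    (n : ℚ)⁻¹ ∈ pIntegral p := by
  show ¬ p ∣ (n : ℚ)⁻¹.den
  rw [Rat.inv_natCast_den]
  split_ifs <;> simp_all

/-- For any prime `p ≡ 3 (mod 4)`, `∑_{k=0}^{(p-1)/2} (1/2)_k^3 / k!^3 ≡ 0 (mod p^2)`,
i.e. this rational number has `p`-adic valuation at least `2`. -/
theorem stmt0 (p : ℕ) (hp : p.Prime) (h : p % 4 = 3) :
    ∃ a b : ℤ, ¬ ((p : ℤ) ∣ b) ∧
      (∑ k ∈ Finset.range ((p - 1) / 2 + 1),
          risingFactorial (1/2) k ^ 3 / (k.factorial : ℚ) ^ 3) * (b : ℚ)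
        = (p : ℚ) ^ 2 * (a : ℚ) := by
  have := Fact.mk hp
  set m := (p - 1) / 2
  set S := ∑ k ∈ range (m + 1), risingFactorial (1/2) k ^ 3 / (k.factorial : ℚ) ^ 3
  have hpm : (p : ℚ) = 2 * m + 1 := by norm_cast; omega
  have h2 : (2 : ℚ)⁻¹ ∈ pIntegral p := by
    exact_mod_cast inv_natCast_mem_pIntegral (Nat.not_dvd_of_pos_of_lt two_pos (by omega))
  have hS : S / p ^ 2 ∈ pIntegral p := by
    obtain ⟨j, hj⟩ : ∃ j, m = 2 * j + 1 := ⟨p / 4, by omega⟩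
    rw [← sub_zero S, ← watsonSum_odd j, ← hj, watsonSum, ← sum_sub_distrib, sum_div, hpm]
    refine sum_mem fun k hk => cube_div_factorial_sub_watsonTerm_div_mem h2 ?_
    exact_mod_cast inv_natCast_mem_pIntegral
      (fun hdvd => by have := (hp.dvd_factorial).1 hdvd; simp at hk; omega)
  refine ⟨(S / p ^ 2).num, (S / p ^ 2).den, by exact_mod_cast hS, ?_⟩
  rw [← Rat.mul_den_eq_num]
  push_cast
  field_simp [hp.ne_zero]
end

section
/- Let n ≡ 3 (mod 4) be a positive integer. Then Φ_n(q)^2 divides the rational function [n^2]_{q^2} · (q^3;q^4)_{(n^2-1)/2} / (q^5;q^4)_{(n^2-1)/2} · q^{(1-n^2)/2} in the localization of ℚ[q] at Φ_n(q). -/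
open Polynomial Finset

/-- The variable `q` as an element of the field of rational functions `ℚ(q)`. -/
noncomputable def Q : RatFunc ℚ := RatFunc.X

/-- The q-shifted factorial `(a;b)_k = (1-a)(1-ab)⋯(1-ab^{k-1})` in `ℚ(q)`. -/
noncomputable def qPoch (a b : RatFunc ℚ) (k : ℕ) : RatFunc ℚ :=
  ∏ i ∈ Finset.range k, (1 - a * b ^ i)

/-!
Write `Φ = Φ_n(q)`, which is prime in `ℚ[q]`. Each factor `1 - q^m` is squarefree and divisible by
`Φ` exactly when `n ∣ m`, so the power of `Φ` in `(q^c;q^4)_k` is the number of `i < k` with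
`n ∣ c + 4i`. For `n ≡ 3 (mod 4)` and `k = (n^2-1)/2` the shift `i ↦ i + (n+1)/2` injects the
indices counted for `c = 5` into those for `c = 3`, missing `i = (n-3)/4`; so the quotient of the two
`q`-shifted factorials is divisible by `Φ`, and `[n^2]_{q^2} = (1 - q^{2n^2}) / (1 - q^2)` supplies
the second factor `Φ`. The power of `q` is harmless since `Φ(0) = 1`.
-/

theorem Prime.exists_prod_eq_pow_card_filter_dvd_mul {α ι : Type*} [CommMonoidWithZero α]
    [DecidableEq ι] {p : α} (hp : Prime p) [DecidablePred (p ∣ ·)] (s : Finset ι) (f : ι → α)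
    (hf : ∀ i ∈ s, ¬ p * p ∣ f i) :
    ∃ c, ∏ i ∈ s, f i = p ^ #{i ∈ s | p ∣ f i} * c ∧ ¬ p ∣ c := by
  induction s using Finset.induction_on with
  | empty => exact ⟨1, by simp, fun h => hp.not_isUnit (isUnit_of_dvd_one h)⟩
  | insert a s ha ih =>
    obtain ⟨c, hc, hpc⟩ := ih fun i hi => hf i (mem_insert_of_mem hi)
    rw [prod_insert ha, filter_insert]
    by_cases hpa : p ∣ f a
    · obtain ⟨w, hw⟩ := hpa
      have hpw : ¬ p ∣ w := fun ⟨v, hv⟩ => hf a (mem_insert_self a s) ⟨v, by rw [hw, hv, mul_assoc]⟩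
      refine ⟨w * c, ?_, fun h => (hp.dvd_or_dvd h).elim hpw hpc⟩
      rw [if_pos ⟨w, hw⟩, card_insert_of_notMem (fun h => ha (mem_filter.mp h).1), hc, hw, pow_succ]
      ac_rfl
    · refine ⟨f a * c, ?_, fun h => (hp.dvd_or_dvd h).elim hpa hpc⟩
      rw [if_neg hpa, hc, mul_left_comm]

theorem cyclotomic_dvd_X_pow_sub_one_iff {n m : ℕ} (hn : 0 < n) :
    cyclotomic n ℚ ∣ X ^ m - 1 ↔ n ∣ m := by
  refine ⟨fun h => ?_, fun ⟨c, hc⟩ =>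
    hc ▸ (cyclotomic.dvd_X_pow_sub_one n ℚ).trans (pow_one_sub_dvd_pow_mul_sub_one X n c)⟩
  have hζ := Complex.isPrimitiveRoot_exp n hn.ne'
  have hdvd : cyclotomic n ℂ ∣ X ^ m - 1 := by
    simpa [map_cyclotomic] using map_dvd (algebraMap ℚ ℂ) h
  have := eval_dvd (x := Complex.exp (2 * Real.pi * Complex.I / n)) hdvd
  rw [(hζ.isRoot_cyclotomic hn).eq_zero, zero_dvd_iff] at this
  simpa [← hζ.pow_eq_one_iff_dvd, sub_eq_zero] using this

theorem cyclotomic_dvd_one_sub_X_pow_iff {n m : ℕ} (hn : 0 < n) :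
    cyclotomic n ℚ ∣ 1 - X ^ m ↔ n ∣ m := by
  rw [← dvd_neg, neg_sub, cyclotomic_dvd_X_pow_sub_one_iff hn]

theorem not_mul_self_dvd_one_sub_X_pow {p : ℚ[X]} (hp : ¬ IsUnit p) {m : ℕ} (hm : 0 < m) :
    ¬ p * p ∣ 1 - X ^ m := by
  rw [← dvd_neg, neg_sub]
  exact fun h => hp <| (X_pow_sub_one_separable_iff.mpr (by exact_mod_cast hm.ne')).squarefree p h

theorem exists_prod_one_sub_X_pow_eq_cyclotomic_pow_mul {n : ℕ} (hn : 0 < n) (c b k : ℕ)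
    (hc : 0 < c) :
    ∃ A : ℚ[X], ∏ i ∈ range k, (1 - X ^ (c + b * i)) =
      cyclotomic n ℚ ^ #{i ∈ range k | n ∣ c + b * i} * A ∧ ¬ cyclotomic n ℚ ∣ A := by
  classical
  have hΦ : Prime (cyclotomic n ℚ) := (cyclotomic.irreducible_rat hn).prime
  obtain ⟨A, hA, hΦA⟩ := hΦ.exists_prod_eq_pow_card_filter_dvd_mul (range k)
    (fun i => 1 - X ^ (c + b * i)) fun i _ => not_mul_self_dvd_one_sub_X_pow hΦ.not_isUnit (by omega)
  refine ⟨A, ?_, hΦA⟩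
  simpa only [cyclotomic_dvd_one_sub_X_pow_iff hn] using hA

theorem cyclotomic_dvd_sum_X_pow_two_mul {n : ℕ} (hn : 2 < n) :
    cyclotomic n ℚ ∣ ∑ i ∈ range (n ^ 2), X ^ (2 * i) := by
  have hΦ : Prime (cyclotomic n ℚ) := (cyclotomic.irreducible_rat (by omega)).prime
  have hgeom : (∑ i ∈ range (n ^ 2), X ^ (2 * i)) * (X ^ 2 - 1) = (X ^ (2 * n ^ 2) - 1 : ℚ[X]) := by
    simp_rw [pow_mul, geom_sum_mul]
  have hdvd : cyclotomic n ℚ ∣ X ^ (2 * n ^ 2) - 1 :=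
    (cyclotomic_dvd_X_pow_sub_one_iff (by omega)).mpr ⟨2 * n, by ring⟩
  rw [← hgeom] at hdvd
  refine (hΦ.dvd_or_dvd hdvd).resolve_right fun h => ?_
  have := Nat.le_of_dvd two_pos ((cyclotomic_dvd_X_pow_sub_one_iff (by omega)).mp h)
  omega

theorem cyclotomic_not_dvd_X_pow {n : ℕ} (hn : 1 < n) (k : ℕ) : ¬ cyclotomic n ℚ ∣ X ^ k := by
  have hΦ := cyclotomic.irreducible_rat (by omega : 0 < n)
  intro h
  have hX : X ∣ cyclotomic n ℚ := hΦ.dvd_symm irreducible_X (hΦ.prime.dvd_of_dvd_pow h)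
  rw [X_dvd_iff, cyclotomic_coeff_zero ℚ hn] at hX
  exact one_ne_zero hX

theorem card_filter_dvd_five_add_lt_card_filter_dvd_three_add {n : ℕ} (h : n % 4 = 3) :
    #{i ∈ range ((n ^ 2 - 1) / 2) | n ∣ 5 + 4 * i} <
      #{i ∈ range ((n ^ 2 - 1) / 2) | n ∣ 3 + 4 * i} := by
  obtain ⟨t, rfl⟩ : ∃ t, n = 4 * t + 3 := ⟨n / 4, by omega⟩
  have hk : ((4 * t + 3) ^ 2 - 1) / 2 = 8 * t ^ 2 + 12 * t + 4 := by
    rw [Nat.sub_eq_of_eq_add (by ring : (4 * t + 3) ^ 2 = 2 * (8 * t ^ 2 + 12 * t + 4) + 1)]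
    omega
  rw [hk]
  have hmem : t ∈ ({i ∈ range (8 * t ^ 2 + 12 * t + 4) | 4 * t + 3 ∣ 3 + 4 * i} : Finset ℕ) :=
    mem_filter.mpr ⟨mem_range.mpr (by nlinarith), ⟨1, by ring⟩⟩
  -- With `n = 4t + 3`: `5 + 4 i = n m` forces `m ≡ 3 (mod 4)`, hence `m ≤ 2 n - 3`; so shifting `i` by `(n + 1) / 2`,
  -- which adds `2 n` to `5 + 4 i`, stays in range.
  refine lt_of_le_of_lt (card_le_card_of_injOn (· + (2 * t + 2)) (fun i hi => ?_)
    (fun _ _ _ _ hij => by simpa using hij)) (card_erase_lt_of_mem hmem)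
  obtain ⟨hik, m, hm⟩ := mem_filter.mp hi
  rw [mem_range] at hik
  have hm4 : m % 4 = 3 := by
    have := Nat.mul_mod (4 * t + 3) m 4
    rw [← hm, show (4 * t + 3) % 4 = 3 by omega] at this
    omega
  have hm_le : m ≤ 8 * t + 3 := by
    by_contra hc
    nlinarith [(by omega : 8 * t + 7 ≤ m)]
  refine mem_erase.mpr ⟨by simp only; omega, mem_filter.mpr ⟨mem_range.mpr ?_, ⟨m + 2, ?_⟩⟩⟩
  · nlinarith
  · linarith

theorem Q_eq_algebraMap_X : Q = algebraMap ℚ[X] (RatFunc ℚ) X :=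
  RatFunc.algebraMap_X.symm

theorem qPoch_Q_pow (a b k : ℕ) :
    qPoch (Q ^ a) (Q ^ b) k =
      algebraMap ℚ[X] (RatFunc ℚ) (∏ i ∈ range k, (1 - X ^ (a + b * i))) := by
  simp [qPoch, Q_eq_algebraMap_X, pow_add, pow_mul]

theorem sum_Q_pow_two_mul (m : ℕ) :
    ∑ i ∈ range m, Q ^ (2 * i) = algebraMap ℚ[X] (RatFunc ℚ) (∑ i ∈ range m, X ^ (2 * i)) := by
  simp [Q_eq_algebraMap_X]

theorem stmt9_general (n : ℕ) (h : n % 4 = 3) :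
    ∃ a b : Polynomial ℚ, ¬ (Polynomial.cyclotomic n ℚ ∣ b) ∧
      ((∑ i ∈ Finset.range (n ^ 2), Q ^ (2 * i))
          * qPoch (Q ^ 3) (Q ^ 4) ((n ^ 2 - 1) / 2)
          / qPoch (Q ^ 5) (Q ^ 4) ((n ^ 2 - 1) / 2)
          * (Q ^ ((n ^ 2 - 1) / 2))⁻¹)
        * algebraMap (Polynomial ℚ) (RatFunc ℚ) b
      = algebraMap (Polynomial ℚ) (RatFunc ℚ) (Polynomial.cyclotomic n ℚ ^ 2 * a) := by
  have hn : 0 < n := by omega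
  obtain ⟨S, hS⟩ := cyclotomic_dvd_sum_X_pow_two_mul (by omega : 2 < n)
  obtain ⟨A, hA, -⟩ := exists_prod_one_sub_X_pow_eq_cyclotomic_pow_mul hn 3 4 _ three_pos
  obtain ⟨B, hB, hΦB⟩ := exists_prod_one_sub_X_pow_eq_cyclotomic_pow_mul hn 5 4 _ (by norm_num)
  obtain ⟨d, hd⟩ := Nat.exists_eq_add_of_lt (card_filter_dvd_five_add_lt_card_filter_dvd_three_add h)
  refine ⟨cyclotomic n ℚ ^ d * S * A, B * X ^ ((n ^ 2 - 1) / 2), fun hdvd => ?_, ?_⟩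
  · exact ((cyclotomic.irreducible_rat hn).prime.dvd_or_dvd hdvd).elim hΦB
      (cyclotomic_not_dvd_X_pow (by omega) _)
  · have hB0 : algebraMap ℚ[X] (RatFunc ℚ) B ≠ 0 :=
      RatFunc.algebraMap_ne_zero fun h0 => hΦB (h0 ▸ dvd_zero _)
    have hΦ0 : algebraMap ℚ[X] (RatFunc ℚ) (cyclotomic n ℚ) ≠ 0 :=
      RatFunc.algebraMap_ne_zero (cyclotomic_ne_zero n ℚ)
    have hX0 : algebraMap ℚ[X] (RatFunc ℚ) X ≠ 0 := RatFunc.algebraMap_ne_zero X_ne_zero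
    rw [sum_Q_pow_two_mul, qPoch_Q_pow, qPoch_Q_pow, hS, hA, hB, hd, Q_eq_algebraMap_X]
    simp only [map_mul, map_pow]
    field_simp
    ring

/-- For `n ≡ 3 (mod 4)` positive, `Φ_n(q)^2` divides
`[n^2]_{q^2} (q^3;q^4)_{(n^2-1)/2} / (q^5;q^4)_{(n^2-1)/2} · q^{(1-n^2)/2}`
in the localization of `ℚ[q]` at `Φ_n(q)`. -/
theorem stmt9 (n : ℕ) (hn : 0 < n) (h : n % 4 = 3) :
    ∃ a b : Polynomial ℚ, ¬ (Polynomial.cyclotomic n ℚ ∣ b) ∧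
      ((∑ i ∈ Finset.range (n ^ 2), Q ^ (2 * i))
          * qPoch (Q ^ 3) (Q ^ 4) ((n ^ 2 - 1) / 2)
          / qPoch (Q ^ 5) (Q ^ 4) ((n ^ 2 - 1) / 2)
          * (Q ^ ((n ^ 2 - 1) / 2))⁻¹)
        * algebraMap (Polynomial ℚ) (RatFunc ℚ) b
      = algebraMap (Polynomial ℚ) (RatFunc ℚ) (Polynomial.cyclotomic n ℚ ^ 2 * a) :=
  stmt9_general n h
end

section
/- Let m and n be positive integers with n ≡ 3 (mod 4), and set N = mn+(n-1)/2. Then the quantity (q^6;q^4)_N (q^{-(4m+2)n};q^4)_N / ((q^4;q^4)_N (q^{2-(4m+2)n};q^4)_N), regarded as a rational function of q, is divisible by Φ_n(q)^2 in the localization of ℚ[q] at Φ_n(q). -/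
/-!
After clearing the negative powers of `q`, the quantity is `A / B` where `A` and `B` are
products of binomials `q^c - q^b` with `b ≠ c`. Up to sign and a power of `q`, such a binomial
is `q^e - 1` with `e = |c - b|`; this is squarefree, and the irreducible `Φ_n` divides it
exactly when `n ∣ e`. So the `Φ_n`-adic valuations of `A` and `B` count the factors with
`b ≡ c (mod n)`. Here `c` is `0` or `(4m+2)n`, and for `N = mn + (n-1)/2` the progressions
`6 + 4i`, `4i` (numerator) and `4 + 4i`, `2 + 4i` (denominator), `i < N`, hit multiples of `n`
exactly `m + 1, m + 1, m, m` times, so the valuation of `A / B` is `2`.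
-/

open Polynomial Finset

namespace Polynomial

variable {n : ℕ}

theorem aeval_eq_zero_of_cyclotomic_dvd {ζ : ℂ} (hζ : IsPrimitiveRoot ζ n) (hn : 0 < n)
    {p : ℚ[X]} (h : cyclotomic n ℚ ∣ p) : aeval ζ p = 0 := by
  obtain ⟨q, rfl⟩ := h
  rw [map_mul, aeval_def, eval₂_eq_eval_map, map_cyclotomic, (hζ.isRoot_cyclotomic hn).eq_zero,
    zero_mul]

theorem cyclotomic_dvd_X_pow_sub_one_iff (hn : 0 < n) {e : ℕ} :
    cyclotomic n ℚ ∣ X ^ e - 1 ↔ n ∣ e := by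
  have hζ := Complex.isPrimitiveRoot_exp n hn.ne'
  refine ⟨fun h => hζ.dvd_of_pow_eq_one e ?_, fun ⟨k, hk⟩ => ?_⟩
  · simpa [sub_eq_zero] using aeval_eq_zero_of_cyclotomic_dvd hζ hn h
  · subst hk
    simpa [pow_mul] using (cyclotomic.dvd_X_pow_sub_one n ℚ).trans
      (sub_dvd_pow_sub_pow ((X : ℚ[X]) ^ n) 1 k)

theorem not_cyclotomic_dvd_X_pow (hn : 0 < n) (e : ℕ) : ¬ cyclotomic n ℚ ∣ X ^ e := by
  have hζ := Complex.isPrimitiveRoot_exp n hn.ne'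
  intro h
  simpa [hζ.ne_zero hn.ne'] using aeval_eq_zero_of_cyclotomic_dvd hζ hn h

theorem emultiplicity_cyclotomic_X_pow_sub_one (hn : 0 < n) {e : ℕ} (he : 0 < e) :
    emultiplicity (cyclotomic n ℚ) (X ^ e - 1) = if n ∣ e then 1 else 0 := by
  split_ifs with h
  · have hsq : Squarefree ((X : ℚ[X]) ^ e - 1) := by
      simpa using
        (separable_X_pow_sub_C (1 : ℚ) (by exact_mod_cast he.ne') one_ne_zero).squarefree
    rw [show (1 : ℕ∞) = (1 : ℕ) from rfl, emultiplicity_eq_coe]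
    refine ⟨by simpa using (cyclotomic_dvd_X_pow_sub_one_iff hn).2 h, fun h2 => ?_⟩
    exact (cyclotomic.irreducible_rat hn).not_isUnit (hsq _ (by simpa [sq] using h2))
  · exact emultiplicity_eq_zero.2 (mt (cyclotomic_dvd_X_pow_sub_one_iff hn).1 h)

theorem emultiplicity_cyclotomic_X_pow_sub_X_pow (hn : 0 < n) {b c : ℕ} (hbc : b ≠ c) :
    emultiplicity (cyclotomic n ℚ) (X ^ b - X ^ c) = if (b : ZMod n) = c then 1 else 0 := by
  wlog hlt : b < c generalizing b c
  · rw [← neg_sub, emultiplicity_neg, this hbc.symm (by omega)]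
    exact if_congr eq_comm rfl rfl
  have hprime := (cyclotomic.irreducible_rat hn).prime
  have hsplit : (X : ℚ[X]) ^ b - X ^ c = -(X ^ b * (X ^ (c - b) - 1)) := by
    rw [mul_sub, ← pow_add, Nat.add_sub_cancel' hlt.le]; ring
  rw [hsplit, emultiplicity_neg, emultiplicity_mul hprime,
    emultiplicity_eq_zero.2 (not_cyclotomic_dvd_X_pow hn b), zero_add,
    emultiplicity_cyclotomic_X_pow_sub_one hn (by omega)]
  simp only [ZMod.natCast_eq_natCast_iff, Nat.modEq_iff_dvd' hlt.le]

theorem emultiplicity_cyclotomic_prod_X_pow_sub_X_pow (hn : 0 < n) {a k c r : ℕ}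
    (hk : k.Coprime n) (hr : ((a + k * r : ℕ) : ZMod n) = c) {N : ℕ}
    (hne : ∀ i < N, c ≠ a + k * i) :
    emultiplicity (cyclotomic n ℚ) (∏ i ∈ range N, (X ^ c - X ^ (a + k * i))) =
      (N / n + if r % n < N % n then 1 else 0 : ℕ) := by
  have hcongr : ∀ i, (c : ZMod n) = ((a + k * i : ℕ) : ZMod n) ↔ (i : ZMod n) = r := by
    intro i
    rw [← hr, eq_comm]
    push_cast
    have hku : IsUnit (k : ZMod n) := (ZMod.unitOfCoprime k hk).isUnit
    rw [add_right_inj, hku.mul_right_inj]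
  rw [Finset.emultiplicity_prod (cyclotomic.irreducible_rat hn).prime,
    sum_congr rfl fun i hi => emultiplicity_cyclotomic_X_pow_sub_X_pow hn (hne i (mem_range.1 hi))]
  simp only [hcongr, sum_boole, ZMod.natCast_eq_natCast_iff]
  rw [← Nat.count_eq_card_filter_range, Nat.count_modEq_card _ hn]

theorem emultiplicity_cyclotomic_prod_X_pow_sub_X_pow_of_mod_four_eq_three (m : ℕ)
    (hn : n % 4 = 3) (a c r : ℕ) (hr : r < n) (har : n ∣ a + 4 * r) (hc : n ∣ c)
    (hne : ∀ i < m * n + (n - 1) / 2, c ≠ a + 4 * i) :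
    emultiplicity (cyclotomic n ℚ)
        (∏ i ∈ range (m * n + (n - 1) / 2), (X ^ c - X ^ (a + 4 * i))) =
      (m + if r < (n - 1) / 2 then 1 else 0 : ℕ) := by
  have hcop : Nat.Coprime 4 n :=
    Nat.Coprime.pow_left 2 (Nat.coprime_two_left.2 (Nat.odd_iff.2 (by omega)))
  have hcast : ((a + 4 * r : ℕ) : ZMod n) = c := by
    rw [(ZMod.natCast_eq_zero_iff _ _).2 har, (ZMod.natCast_eq_zero_iff _ _).2 hc]
  rw [emultiplicity_cyclotomic_prod_X_pow_sub_X_pow (by omega) hcop hcast hne,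
    Nat.mod_eq_of_lt hr, mul_comm m, Nat.mul_add_div (by omega), Nat.mul_add_mod,
    Nat.div_eq_of_lt (by omega), Nat.mod_eq_of_lt (by omega), add_zero]

end Polynomial

theorem exists_div_mul_algebraMap_eq_pow_mul {R K : Type*} [CommRing R] [IsDomain R] [Field K]
    [Algebra R K] [IsFractionRing R K] {p f g : R} {k j : ℕ} (hf : p ^ (k + j) ∣ f)
    (hg : emultiplicity p g = j) :
    ∃ a b, ¬ p ∣ b ∧
      algebraMap R K f / algebraMap R K g * algebraMap R K b = algebraMap R K (p ^ k * a) := by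
  obtain ⟨⟨b, rfl⟩, hnot⟩ := emultiplicity_eq_coe.1 hg
  obtain ⟨a, rfl⟩ := hf
  have hg0 : algebraMap R K (p ^ j * b) ≠ 0 := by
    refine (map_ne_zero_iff _ (IsFractionRing.injective R K)).2 fun h => ?_
    simp [h] at hg
  refine ⟨a, b, fun ⟨c, hc⟩ => hnot ⟨c, by rw [hc]; ring⟩, ?_⟩
  rw [div_mul_eq_mul_div, div_eq_iff hg0]
  simp only [map_mul, map_pow]
  ring

theorem qPoch_Q_pow_mul_inv (a k d N : ℕ) :
    qPoch (Q ^ a * (Q ^ d)⁻¹) (Q ^ k) N =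
      algebraMap ℚ[X] (RatFunc ℚ) (∏ i ∈ range N, (X ^ d - X ^ (a + k * i))) /
        Q ^ (d * N) := by
  have hQ : (RatFunc.X : RatFunc ℚ) ≠ 0 := RatFunc.X_ne_zero
  rw [qPoch, map_prod, pow_mul, show (Q ^ d) ^ N = ∏ _i ∈ range N, Q ^ d by simp,
    ← prod_div_distrib]
  unfold Q
  refine prod_congr rfl fun i _ => ?_
  simp only [map_sub, map_pow, RatFunc.algebraMap_X]
  field_simp
  ring

theorem qPoch_mul_qPoch_inv_div (a b c d k N : ℕ) :
    qPoch (Q ^ a) (Q ^ k) N * qPoch ((Q ^ d)⁻¹) (Q ^ k) N /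
        (qPoch (Q ^ b) (Q ^ k) N * qPoch (Q ^ c * (Q ^ d)⁻¹) (Q ^ k) N) =
      algebraMap ℚ[X] (RatFunc ℚ) ((∏ i ∈ range N, (X ^ 0 - X ^ (a + k * i))) *
          ∏ i ∈ range N, (X ^ d - X ^ (0 + k * i))) /
        algebraMap ℚ[X] (RatFunc ℚ) ((∏ i ∈ range N, (X ^ 0 - X ^ (b + k * i))) *
          ∏ i ∈ range N, (X ^ d - X ^ (c + k * i))) := by
  have hpos : ∀ a, qPoch (Q ^ a) (Q ^ k) N =
      algebraMap ℚ[X] (RatFunc ℚ) (∏ i ∈ range N, (X ^ 0 - X ^ (a + k * i))) := fun a => by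
    simpa using qPoch_Q_pow_mul_inv a k 0 N
  have hinv : qPoch ((Q ^ d)⁻¹) (Q ^ k) N =
      algebraMap ℚ[X] (RatFunc ℚ) (∏ i ∈ range N, (X ^ d - X ^ (0 + k * i))) / Q ^ (d * N) := by
    simpa using qPoch_Q_pow_mul_inv 0 k d N
  rw [hpos, hpos, hinv, qPoch_Q_pow_mul_inv, mul_div_assoc', mul_div_assoc',
    div_div_div_cancel_right₀ (pow_ne_zero _ RatFunc.X_ne_zero), map_mul, map_mul]

theorem stmt18_general (m n : ℕ) (hn : 0 < n) (h : n % 4 = 3) :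
    ∃ a b : Polynomial ℚ, ¬ (Polynomial.cyclotomic n ℚ ∣ b) ∧
      (qPoch (Q ^ 6) (Q ^ 4) (m * n + (n - 1) / 2)
          * qPoch ((Q ^ ((4 * m + 2) * n))⁻¹) (Q ^ 4) (m * n + (n - 1) / 2)
        / (qPoch (Q ^ 4) (Q ^ 4) (m * n + (n - 1) / 2)
            * qPoch (Q ^ 2 * (Q ^ ((4 * m + 2) * n))⁻¹) (Q ^ 4) (m * n + (n - 1) / 2)))
        * algebraMap (Polynomial ℚ) (RatFunc ℚ) b
      = algebraMap (Polynomial ℚ) (RatFunc ℚ) (Polynomial.cyclotomic n ℚ ^ 2 * a) := by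
  set N := m * n + (n - 1) / 2
  set d := (4 * m + 2) * n with hd
  have hdN : 4 * N + 2 ≤ d := by
    have : d = 4 * (m * n) + 2 * n := by rw [hd]; ring
    omega
  have hdvd : n ∣ d := dvd_mul_left n _
  have hprime := (cyclotomic.irreducible_rat hn).prime
  have hmult := emultiplicity_cyclotomic_prod_X_pow_sub_X_pow_of_mod_four_eq_three m h
  have e1 := hmult 6 0 ((n - 3) / 2) (by omega) ⟨2, by omega⟩ (dvd_zero n) (by omega)
  have e2 := hmult 0 d 0 (by omega) (by simp) hdvd (by omega)
  have e3 := hmult 4 0 (n - 1) (by omega) ⟨4, by omega⟩ (dvd_zero n) (by omega)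
  have e4 := hmult 2 d ((n - 1) / 2) (by omega) ⟨2, by omega⟩ hdvd (by omega)
  rw [if_pos (by omega)] at e1 e2
  rw [if_neg (by omega)] at e3 e4
  rw [qPoch_mul_qPoch_inv_div]
  refine exists_div_mul_algebraMap_eq_pow_mul (k := 2) (j := 2 * m)
    (pow_dvd_of_le_emultiplicity ?_) ?_
  · rw [emultiplicity_mul hprime, e1, e2]
    norm_cast
    omega
  · rw [emultiplicity_mul hprime, e3, e4]
    norm_cast
    omega

/-- For positive integers `m, n` with `n ≡ 3 (mod 4)` and `N = mn+(n-1)/2`, the rational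
function `(q^6;q^4)_N (q^{-(4m+2)n};q^4)_N / ((q^4;q^4)_N (q^{2-(4m+2)n};q^4)_N)` is
divisible by `Φ_n(q)^2` in the localization of `ℚ[q]` at `Φ_n(q)`. -/
theorem stmt18 (m n : ℕ) (hm : 0 < m) (hn : 0 < n) (h : n % 4 = 3) :
    ∃ a b : Polynomial ℚ, ¬ (Polynomial.cyclotomic n ℚ ∣ b) ∧
      (qPoch (Q ^ 6) (Q ^ 4) (m * n + (n - 1) / 2)
          * qPoch ((Q ^ ((4 * m + 2) * n))⁻¹) (Q ^ 4) (m * n + (n - 1) / 2)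
        / (qPoch (Q ^ 4) (Q ^ 4) (m * n + (n - 1) / 2)
            * qPoch (Q ^ 2 * (Q ^ ((4 * m + 2) * n))⁻¹) (Q ^ 4) (m * n + (n - 1) / 2)))
        * algebraMap (Polynomial ℚ) (RatFunc ℚ) b
      = algebraMap (Polynomial ℚ) (RatFunc ℚ) (Polynomial.cyclotomic n ℚ ^ 2 * a) :=
  stmt18_general m n hn h
end
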